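/- arXiv:2312.04842 — 5 statements merged into one kernel-verified Lean document; each statement's English description precedes it below -/
import Mathlib

section
/- Let A be a commutative ring, let P and Q be A-modules, and let g : P × P → Q be a symmetric A-bilinear map. Then the abelian group A × P × Q, with componentwise addition, with multiplication (a,p,q)·(a′,p′,q′) := (a·a′, a•p′ + a′•p, a•q′ + a′•q + g(p,p′)), and with unit (1,0,0), is a commutative, associative, unital ring (the triole ring 𝒯 = 𝒯(A,P,Q,g)). -/
/-- The triole ring structure. Given a commutative ring `A`, `A`-modules
`P` and `Q`, and a symmetric `A`-bilinear map `g : P × P → Q`, the abelian group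
`A × P × Q` (componentwise addition) with the multiplication
`(a,p,q)·(a′,p′,q′) := (a·a′, a•p′ + a′•p, a•q′ + a′•q + g(p,p′))`
is a commutative, associative, unital ring with unit `(1,0,0)`. -/
theorem triole_ring_structure {A P Q : Type*} [CommRing A]
    [AddCommGroup P] [Module A P] [AddCommGroup Q] [Module A Q]
    (g : P →ₗ[A] P →ₗ[A] Q) (hg : ∀ p p' : P, g p p' = g p' p) :
    let mul : A × P × Q → A × P × Q → A × P × Q := fun t t' =>
      (t.1 * t'.1, t.1 • t'.2.1 + t'.1 • t.2.1,
        t.1 • t'.2.2 + t'.1 • t.2.2 + g t.2.1 t'.2.1)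
    -- commutativity
    (∀ t t', mul t t' = mul t' t) ∧
    -- associativity
    (∀ t t' t'', mul (mul t t') t'' = mul t (mul t' t'')) ∧
    -- unit (1,0,0)
    (∀ t, mul ((1 : A), (0 : P), (0 : Q)) t = t) ∧
    (∀ t, mul t ((1 : A), (0 : P), (0 : Q)) = t) ∧
    -- distributivity over the componentwise addition
    (∀ t t' t'', mul t (t' + t'') = mul t t' + mul t t'') ∧
    (∀ t t' t'', mul (t + t') t'' = mul t t'' + mul t' t'') := by
  intro mul
  refine ⟨?_, ?_, ?_, ?_, ?_, ?_⟩
  · rintro ⟨a,p,q⟩ ⟨a',p',q'⟩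
    simp only [mul, Prod.mk.injEq]
    exact ⟨mul_comm _ _, add_comm _ _, by rw [hg]; abel⟩
  · rintro ⟨a,p,q⟩ ⟨a',p',q'⟩ ⟨a'',p'',q''⟩
    simp only [mul, Prod.mk.injEq, smul_add, map_add, map_smul, LinearMap.add_apply,
      LinearMap.smul_apply, smul_smul]
    refine ⟨mul_assoc _ _ _, by rw [mul_comm a'' a, mul_comm a'' a']; abel, ?_⟩
    rw [mul_comm a'' a, mul_comm a'' a']
    abel
  · rintro ⟨a,p,q⟩; simp [mul]
  · rintro ⟨a,p,q⟩; simp [mul]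
  · rintro ⟨a,p,q⟩ ⟨a',p',q'⟩ ⟨a'',p'',q''⟩
    simp only [mul, Prod.mk.injEq, Prod.fst_add, Prod.snd_add, smul_add, map_add,
      add_smul, LinearMap.add_apply, Prod.mk_add_mk]
    exact ⟨by ring, by abel, by abel⟩
  · rintro ⟨a,p,q⟩ ⟨a',p',q'⟩ ⟨a'',p'',q''⟩
    simp only [mul, Prod.mk.injEq, Prod.fst_add, Prod.snd_add, smul_add, map_add,
      add_smul, LinearMap.add_apply, Prod.mk_add_mk]
    exact ⟨by ring, by abel, by abel⟩
end

section
/- Let 𝒯 = 𝒯(A,P,Q,g) be the triole ring. Let X^A : A → A, X^P : P → P, X^Q : Q → Q be additive maps and define D : 𝒯 → 𝒯 by D(a,p,q) := (X^A(a), X^P(p), X^Q(q)). Then D satisfies the Leibniz rule D(t·t′) = D(t)·t′ + t·D(t′) for all t, t′ ∈ 𝒯 if and only if: X^A is a derivation of A; X^P is a Der-operator on P with symbol X^A; X^Q is a Der-operator on Q with symbol X^A; and X^Q(g(p₁,p₂)) = g(X^P(p₁),p₂) + g(p₁,X^P(p₂)) for all p₁,p₂ ∈ P. -/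
/-! Each of the four conditions is the Leibniz rule evaluated on a pair of "pure" elements
`(a,0,0)`, `(0,p,0)`, `(0,0,q)`, where all other terms of the triole product vanish; conversely,
by additivity of `X^P` and `X^Q` the Leibniz rule splits componentwise into exactly these
four identities. -/

/-- The multiplication of the triole ring `𝒯 = 𝒯(A,P,Q,g)` on `A × P × Q`. -/
def trioleMul {A P Q : Type*} [CommRing A]
    [AddCommGroup P] [Module A P] [AddCommGroup Q] [Module A Q]
    (g : P →ₗ[A] P →ₗ[A] Q) : A × P × Q → A × P × Q → A × P × Q := fun t t' =>
  (t.1 * t'.1, t.1 • t'.2.1 + t'.1 • t.2.1,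
    t.1 • t'.2.2 + t'.1 • t.2.2 + g t.2.1 t'.2.1)

section TrioleDerivation

variable {A P Q : Type*} [CommRing A] [AddCommGroup P] [Module A P] [AddCommGroup Q] [Module A Q]
  (g : P →ₗ[A] P →ₗ[A] Q)

def IsTrioleDerivation (D : A × P × Q → A × P × Q) : Prop :=
  ∀ t t', D (trioleMul g t t') = trioleMul g (D t) t' + trioleMul g t (D t')

variable {g} {XA : A → A} {XP : P → P} {XQ : Q → Q}

namespace IsTrioleDerivation

variable (h : IsTrioleDerivation g (Prod.map XA (Prod.map XP XQ)))
include h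

theorem map_mul (a a' : A) : XA (a * a') = XA a * a' + a * XA a' := by
  simpa [trioleMul] using congrArg Prod.fst (h (a, 0, 0) (a', 0, 0))

theorem map_smul_P (a : A) (p : P) : XP (a • p) = XA a • p + a • XP p := by
  simpa [trioleMul] using congrArg (·.2.1) (h (a, 0, 0) (0, p, 0))

theorem map_smul_Q (a : A) (q : Q) : XQ (a • q) = XA a • q + a • XQ q := by
  simpa [trioleMul] using congrArg (·.2.2) (h (a, 0, 0) (0, 0, q))

theorem map_bilin (p₁ p₂ : P) : XQ (g p₁ p₂) = g (XP p₁) p₂ + g p₁ (XP p₂) := by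
  simpa [trioleMul] using congrArg (·.2.2) (h (0, p₁, 0) (0, p₂, 0))

end IsTrioleDerivation

theorem isTrioleDerivation_prodMap
    (hXP : ∀ p p', XP (p + p') = XP p + XP p') (hXQ : ∀ q q', XQ (q + q') = XQ q + XQ q')
    (hA : ∀ a a', XA (a * a') = XA a * a' + a * XA a')
    (hP : ∀ (a : A) (p : P), XP (a • p) = XA a • p + a • XP p)
    (hQ : ∀ (a : A) (q : Q), XQ (a • q) = XA a • q + a • XQ q)
    (hg : ∀ p₁ p₂ : P, XQ (g p₁ p₂) = g (XP p₁) p₂ + g p₁ (XP p₂)) :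
    IsTrioleDerivation g (Prod.map XA (Prod.map XP XQ)) := by
  rintro ⟨a, p, q⟩ ⟨a', p', q'⟩
  simp only [trioleMul, Prod.map, Prod.mk_add_mk, Prod.mk.injEq]
  refine ⟨hA a a', ?_, ?_⟩
  · rw [hXP, hP, hP]; abel
  · rw [hXQ, hXQ, hQ, hQ, hg]; abel

end TrioleDerivation

theorem triolic_degree_zero_derivation_general {A P Q : Type*} [CommRing A]
    [AddCommGroup P] [Module A P] [AddCommGroup Q] [Module A Q]
    (g : P →ₗ[A] P →ₗ[A] Q)
    (XA : A → A)
    (XP : P → P) (hXP : ∀ p p', XP (p + p') = XP p + XP p')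
    (XQ : Q → Q) (hXQ : ∀ q q', XQ (q + q') = XQ q + XQ q') :
    let D : A × P × Q → A × P × Q := fun t => (XA t.1, XP t.2.1, XQ t.2.2)
    (∀ t t', D (trioleMul g t t') = trioleMul g (D t) t' + trioleMul g t (D t')) ↔
      ((∀ a a', XA (a * a') = XA a * a' + a * XA a') ∧
       (∀ (a : A) (p : P), XP (a • p) = XA a • p + a • XP p) ∧
       (∀ (a : A) (q : Q), XQ (a • q) = XA a • q + a • XQ q) ∧
       (∀ p₁ p₂ : P, XQ (g p₁ p₂) = g (XP p₁) p₂ + g p₁ (XP p₂))) := by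
  change IsTrioleDerivation g (Prod.map XA (Prod.map XP XQ)) ↔ _
  refine ⟨fun h => ⟨h.map_mul, h.map_smul_P, h.map_smul_Q, h.map_bilin⟩, ?_⟩
  rintro ⟨hA, hP, hQ, hg⟩
  exact isTrioleDerivation_prodMap hXP hXQ hA hP hQ hg

/-- A degree-zero triolic derivation `D(a,p,q) = (X^A a, X^P p, X^Q q)`
satisfies the Leibniz rule iff `X^A` is a derivation of `A`, `X^P` and `X^Q` are
Der-operators on `P` and `Q` with symbol `X^A`, and `X^Q` is a symmetry of `g`
relative to `X^P`. -/
theorem triolic_degree_zero_derivation {A P Q : Type*} [CommRing A]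
    [AddCommGroup P] [Module A P] [AddCommGroup Q] [Module A Q]
    (g : P →ₗ[A] P →ₗ[A] Q) (hg : ∀ p p' : P, g p p' = g p' p)
    (XA : A → A) (hXA : ∀ a a', XA (a + a') = XA a + XA a')
    (XP : P → P) (hXP : ∀ p p', XP (p + p') = XP p + XP p')
    (XQ : Q → Q) (hXQ : ∀ q q', XQ (q + q') = XQ q + XQ q') :
    let D : A × P × Q → A × P × Q := fun t => (XA t.1, XP t.2.1, XQ t.2.2)
    (∀ t t', D (trioleMul g t t') = trioleMul g (D t) t' + trioleMul g t (D t')) ↔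
      ((∀ a a', XA (a * a') = XA a * a' + a * XA a') ∧
       (∀ (a : A) (p : P), XP (a • p) = XA a • p + a • XP p) ∧
       (∀ (a : A) (q : Q), XQ (a • q) = XA a • q + a • XQ q) ∧
       (∀ p₁ p₂ : P, XQ (g p₁ p₂) = g (XP p₁) p₂ + g p₁ (XP p₂))) :=
  triolic_degree_zero_derivation_general g XA XP hXP XQ hXQ
end

section
/- Let 𝒯 = 𝒯(A,P,Q,g) be the triole ring. Let X₁^A : A → P and X₁^P : P → Q be additive maps and define D : 𝒯 → 𝒯 by D(a,p,q) := (0, X₁^A(a), X₁^P(p)). Then D satisfies the Leibniz rule D(t·t′) = D(t)·t′ + t·D(t′) for all t, t′ ∈ 𝒯 if and only if: X₁^A is a P-valued derivation of A, i.e. X₁^A(a·a′) = a•X₁^A(a′) + a′•X₁^A(a) for all a,a′ ∈ A, and X₁^P(a•p) = g(X₁^A(a), p) + a•X₁^P(p) for all a ∈ A, p ∈ P. -/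
/-- A degree-one triolic derivation `D(a,p,q) = (0, X₁^A a, X₁^P p)`
satisfies the Leibniz rule iff `X₁^A` is a `P`-valued derivation of `A` and
`X₁^P(a•p) = g(X₁^A a, p) + a•X₁^P p`. -/
theorem triolic_degree_one_derivation {A P Q : Type*} [CommRing A]
    [AddCommGroup P] [Module A P] [AddCommGroup Q] [Module A Q]
    (g : P →ₗ[A] P →ₗ[A] Q) (hg : ∀ p p' : P, g p p' = g p' p)
    (X1A : A → P) (hX1A : ∀ a a', X1A (a + a') = X1A a + X1A a')
    (X1P : P → Q) (hX1P : ∀ p p', X1P (p + p') = X1P p + X1P p') :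
    let D : A × P × Q → A × P × Q := fun t => ((0 : A), X1A t.1, X1P t.2.1)
    (∀ t t', D (trioleMul g t t') = trioleMul g (D t) t' + trioleMul g t (D t')) ↔
      ((∀ a a' : A, X1A (a * a') = a • X1A a' + a' • X1A a) ∧
       (∀ (a : A) (p : P), X1P (a • p) = g (X1A a) p + a • X1P p)) := by
  intro D
  have hA0 : X1A 0 = 0 := by
    have := hX1A 0 0; simpa using this.symm
  have hP0 : X1P 0 = 0 := by
    have := hX1P 0 0; simpa using this.symm
  constructor
  · intro h
    constructor
    · intro a a'
      have := congrArg (fun t => t.2.1) (h (a, 0, 0) (a', 0, 0))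
      simpa [D, trioleMul, add_comm] using this
    · intro a p
      have := congrArg (fun t => t.2.2) (h (a, 0, 0) (0, p, 0))
      simpa [D, trioleMul, hA0, hP0] using this
  · rintro ⟨h1, h2⟩ ⟨a, p, q⟩ ⟨a', p', q'⟩
    refine Prod.ext (by simp [D, trioleMul]) (Prod.ext ?_ ?_)
    · simpa [D, trioleMul, add_comm] using h1 a a'
    · simp only [D, trioleMul, Prod.snd_add, Prod.fst_add, Prod.mk_add_mk, hX1P, h2, hg p (X1A a'), zero_smul, add_zero]
      abel
end

section
/- Let 𝒯 = 𝒯(A,P,Q,g) be the triole ring. Let X^P : P → P and X^Q : Q → Q be additive maps and define D : 𝒯 → 𝒯 by D(a,p,q) := (0, X^P(p), X^Q(q)). Then D satisfies the Leibniz rule D(t·t′) = D(t)·t′ + t·D(t′) for all t, t′ ∈ 𝒯 if and only if X^P and X^Q are A-linear and X^Q(g(p₁,p₂)) = g(X^P(p₁),p₂) + g(p₁,X^P(p₂)) for all p₁,p₂ ∈ P. In other words, the kernel of the symbol map σ sending a grading-preserving derivation (X^A, X^P, X^Q) of 𝒯 to X^A consists exactly of the pairs (X^P, X^Q) in End(g;P,Q)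 := {(X,Y) ∈ End_A(P) × End_A(Q) : Y∘g = g∘(X⊗1 + 1⊗X)}. -/
/-- A degree-zero triolic derivation with zero scalar symbol,
`D(a,p,q) = (0, X^P p, X^Q q)`, satisfies the Leibniz rule iff `X^P` and `X^Q`
are `A`-linear and `X^Q(g(p₁,p₂)) = g(X^P p₁, p₂) + g(p₁, X^P p₂)`; i.e. the
kernel of the symbol map consists of the pairs in `End(g;P,Q)`. -/
theorem triolic_symbol_kernel {A P Q : Type*} [CommRing A]
    [AddCommGroup P] [Module A P] [AddCommGroup Q] [Module A Q]
    (g : P →ₗ[A] P →ₗ[A] Q) (hg : ∀ p p' : P, g p p' = g p' p)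
    (XP : P → P) (hXP : ∀ p p', XP (p + p') = XP p + XP p')
    (XQ : Q → Q) (hXQ : ∀ q q', XQ (q + q') = XQ q + XQ q') :
    let D : A × P × Q → A × P × Q := fun t => ((0 : A), XP t.2.1, XQ t.2.2)
    (∀ t t', D (trioleMul g t t') = trioleMul g (D t) t' + trioleMul g t (D t')) ↔
      ((∀ (a : A) (p : P), XP (a • p) = a • XP p) ∧
       (∀ (a : A) (q : Q), XQ (a • q) = a • XQ q) ∧
       (∀ p₁ p₂ : P, XQ (g p₁ p₂) = g (XP p₁) p₂ + g p₁ (XP p₂))) := by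
  intro D
  have hP0 : XP 0 = 0 := by
    have h := hXP 0 0
    simpa using h.symm
  have hQ0 : XQ 0 = 0 := by
    have h := hXQ 0 0
    simpa using h.symm
  constructor
  · intro h
    refine ⟨?_, ?_, ?_⟩
    · intro a p
      have := congrArg (fun t => t.2.1) (h (0, p, 0) (a, 0, 0))
      simpa [D, trioleMul, hP0, hQ0] using this
    · intro a q
      have := congrArg (fun t => t.2.2) (h (0, 0, q) (a, 0, 0))
      simpa [D, trioleMul, hP0, hQ0] using this
    · intro p₁ p₂
      have := congrArg (fun t => t.2.2) (h (0, p₁, 0) (0, p₂, 0))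
      simpa [D, trioleMul, hP0, hQ0] using this
  · rintro ⟨h1, h2, h3⟩ t t'
    simp only [D, trioleMul, Prod.mk.injEq, Prod.ext_iff]
    refine ⟨by simp, ?_, ?_⟩
    · simp [hXP, h1]
      abel
    · simp [hXQ, h2, h3]
      abel
end

section
/- Let A and B be commutative algebras over a field of characteristic zero, φ : A → B a ring homomorphism, P an A-module, Q a B-module, and φ̄ : P → Q an A-linear map. Let 𝒜 = A ⊕ P be the diole algebra (trivial square-zero extension) and let 𝒫 = B × Q be the 𝒜-module with action (a,p)•(b,q) := (φ(a)·b, φ(a)•q + b•φ̄(p)). Let Δ^A : A → B and Δ^P : P → Q be additive maps and define Δ : 𝒜 → 𝒫 by Δ(a,p) := (Δ^A(a), Δ^P(p)). For t ∈ 𝒜 set δ_t(Δ)(s) := t•Δ(s) − Δ(t·s). Then Δ is a differential operator of order ≤ k over 𝒜 (i.e. δ_{t₀}∘⋯∘δ_{t_k}(Δ) = 0 for all t₀,…,t_k ∈ 𝒜) if and only if: Δ^A is a differential operator of order ≤ k along φ (δ_{a₀}∘⋯∘δ_{a_k}(Δ^A) = 0 for all aᵢ ∈ A, where δ_a(Δ^A)(x)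 := φ(a)·Δ^A(x) − Δ^A(a·x)); Δ^P is a differential operator of order ≤ k from P to Q regarded as an A-module via φ (with δ_a(Δ^P)(p) := φ(a)•Δ^P(p) − Δ^P(a•p)); and φ̄(p)•δ_a^k(Δ^A)(1_A) = δ_a^k(Δ^P)(p) for all a ∈ A, p ∈ P, where δ_a^k denotes the k-fold iterate of δ_a. -/
/-- The multiplication of the diole algebra `𝒜 = A ⊕ P` (trivial square-zero
extension) on `A × P`. -/
def dioleMul {A P : Type*} [CommRing A] [AddCommGroup P] [Module A P] :
    A × P → A × P → A × P :=
  fun s t => (s.1 * t.1, s.1 • t.2 + t.1 • s.2)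

/-- The action of the diole algebra `𝒜 = A ⊕ P` on the diole module
`𝒫_φ̄ = B × Q`: `(a,p)•(b,q) := (φ(a)·b, φ(a)•q + b•φ̄(p))`. -/
def dioleAct {A B P Q : Type*} [CommRing A] [CommRing B]
    [AddCommGroup P] [Module A P] [AddCommGroup Q] [Module B Q]
    (φ : A →+* B) (φb : P → Q) : A × P → B × Q → B × Q :=
  fun s x => (φ s.1 * x.1, φ s.1 • x.2 + x.1 • φb s.2)

/-- `δ_t(Δ)(s) := t•Δ(s) − Δ(t·s)` for maps `𝒜 → 𝒫_φ̄`. -/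
def dioleDelta {A B P Q : Type*} [CommRing A] [CommRing B]
    [AddCommGroup P] [Module A P] [AddCommGroup Q] [Module B Q]
    (φ : A →+* B) (φb : P → Q) (t : A × P) (Δ : A × P → B × Q) : A × P → B × Q :=
  fun s => dioleAct φ φb t (Δ s) - Δ (dioleMul t s)

/-- `δ_a(Δ^A)(x) := φ(a)·Δ^A(x) − Δ^A(a·x)` for maps `A → B` along `φ`. -/
def deltaAB {A B : Type*} [CommRing A] [CommRing B] (φ : A →+* B)
    (a : A) (Δ : A → B) : A → B :=
  fun x => φ a * Δ x - Δ (a * x)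

/-- `δ_a(Δ^P)(p) := φ(a)•Δ^P(p) − Δ^P(a•p)` for maps `P → Q` along `φ`. -/
def deltaPQ {A B P Q : Type*} [CommRing A] [CommRing B]
    [AddCommGroup P] [Module A P] [AddCommGroup Q] [Module B Q]
    (φ : A →+* B) (a : A) (Δ : P → Q) : P → Q :=
  fun p => φ a • Δ p - Δ (a • p)

/-!
Iterating `δ_t`, `t = (a, p)`, on `Δ = (Δ^A, Δ^P)` acts by `δ_a` on both components, up to a
cross term `A → Q` assembled from the defects `x ↦ D^A(x) • φ̄(p) − D^P(x • p)` of iterates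
`D^A`, `D^P` of `Δ^A`, `Δ^P`. Lists with all `p = 0` give the first two conditions, and the list
`(a, p), (a, 0), …, (a, 0)` gives the third. Conversely, if `Δ^A` and `Δ^P` have order `≤ k`, their
`k`-fold iterates are `φ`-semilinear, so such a defect is determined by its value at `1`. That
value is a symmetric multiadditive function of the `k` elements of `A` used, vanishing on the
diagonal by the third condition, hence zero by polarization: `Q` is a `K`-vector space, so
`k!` is invertible on it.
-/

theorem List.ofFn_update {α : Type*} {n : ℕ} [DecidableEq (Fin n)] (v : Fin n → α) (i : Fin n)
    (a : α) : List.ofFn (Function.update v i a) = (List.ofFn v).set i a := by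
  refine List.ext_getElem (by simp) fun j _ _ => ?_
  simp only [List.getElem_ofFn, List.getElem_set, Function.update_apply, Fin.ext_iff]
  grind

theorem List.foldr_replicate {α β : Type*} (f : α → β → β) (b : β) (a : α) (n : ℕ) :
    (List.replicate n a).foldr f b = (f a)^[n] b := by
  induction n with
  | zero => rfl
  | succ n ih => rw [List.replicate_succ, List.foldr_cons, ih, Function.iterate_succ_apply']

theorem IsAddTorsionFree.of_module_of_algebra (K : Type*) {B Q : Type*} [Field K] [CharZero K]
    [Semiring B] [Algebra K B] [AddCommGroup Q] [Module B Q] : IsAddTorsionFree Q :=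
  letI := Module.compHom Q ((algebraMap K B).comp (algebraMap ℚ K))
  IsAddTorsionFree.of_module_rat Q

section Polarization

open Finset
open scoped Nat

variable {R M N : Type*} [Semiring R] [AddCommMonoid M] [AddCommGroup N] [Module R M] [Module R N]
  {k : ℕ}

/-- Expanding the right-hand side by multilinearity, inclusion–exclusion leaves exactly the terms
`f (v ∘ r)` with `r` surjective, i.e. a permutation. -/
theorem MultilinearMap.factorial_smul_eq_sum_powerset (f : MultilinearMap R (fun _ : Fin k => M) N)
    (hf : ∀ (v : Fin k → M) (σ : Equiv.Perm (Fin k)), f (v ∘ σ) = f v) (v : Fin k → M) :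
    k ! • f v = ∑ t ∈ univ.powerset, (-1 : ℤ) ^ #t • f (fun _ => ∑ i ∈ tᶜ, v i) := by
  classical
  let S : Fin k → Finset (Fin k → Fin k) := fun i => {r | ∀ j, r j ≠ i}
  have hsurj : univ.inf (fun i => (S i)ᶜ) = univ.filter Function.Surjective := by
    ext r
    simp [S, Finset.mem_inf, Function.Surjective]
  have hpi : ∀ t : Finset (Fin k), t.inf S = Fintype.piFinset (fun _ => tᶜ) := by
    intro t
    ext r
    simp only [S, Finset.mem_inf, mem_filter, Fintype.mem_piFinset, mem_compl]
    grind
  calc k ! • f v = ∑ σ : Equiv.Perm (Fin k), f (v ∘ σ) := by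
        simp [hf, Fintype.card_perm]
    _ = ∑ r ∈ univ.inf fun i => (S i)ᶜ, f (v ∘ r) := by
        rw [hsurj]
        refine sum_nbij (fun σ => ⇑σ) (fun σ _ => by simpa using σ.surjective)
          (fun σ _ τ _ h => Equiv.ext (congrFun h)) (fun r hr => ?_) (fun _ _ => rfl)
        have hr : r.Bijective := Finite.surjective_iff_bijective.1 (mem_filter.1 hr).2
        exact ⟨Equiv.ofBijective r hr, by simp, rfl⟩
    _ = ∑ t ∈ univ.powerset, (-1 : ℤ) ^ #t • ∑ r ∈ t.inf S, f (v ∘ r) :=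
        inclusion_exclusion_sum_inf_compl _ _ _
    _ = _ := by
        simp_rw [hpi, f.map_sum_finset]
        rfl

theorem MultilinearMap.eq_zero_of_symmetric_of_map_const_eq_zero [IsAddTorsionFree N]
    (f : MultilinearMap R (fun _ : Fin k => M) N)
    (hf : ∀ (v : Fin k → M) (σ : Equiv.Perm (Fin k)), f (v ∘ σ) = f v)
    (hconst : ∀ m, f (fun _ => m) = 0) : f = 0 := by
  ext v
  refine nsmul_right_injective (Nat.factorial_ne_zero k) ?_
  simp [f.factorial_smul_eq_sum_powerset hf, hconst]

end Polarization

theorem List.eq_zero_of_perm_invariant_of_set_add {M N : Type*} [AddCommGroup M] [AddCommGroup N]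
    [IsAddTorsionFree N] {k : ℕ} (g : List M → N)
    (hadd : ∀ (l : List M) (i : ℕ) (a b : M), i < l.length →
      g (l.set i (a + b)) = g (l.set i a) + g (l.set i b))
    (hperm : ∀ l l' : List M, l.Perm l' → g l = g l')
    (hconst : ∀ a, g (List.replicate k a) = 0) {l : List M} (hl : l.length = k) : g l = 0 := by
  subst hl
  let F : MultilinearMap ℤ (fun _ : Fin l.length => M) N :=
    { toFun := fun v => g (List.ofFn v)
      map_update_add' := fun v i a b => by
        simpa only [List.ofFn_update] using hadd _ i a b (by simp)
      map_update_smul' := fun v i c a => by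
        simp only [List.ofFn_update]
        exact map_zsmul (AddMonoidHom.mk' (fun a => g ((List.ofFn v).set i a))
          fun a b => hadd _ i a b (by simp)) c a }
  have hF : F = 0 := F.eq_zero_of_symmetric_of_map_const_eq_zero
    (fun v σ => hperm _ _ (Equiv.Perm.ofFn_comp_perm σ v))
    (fun a => by simpa [F] using hconst a)
  simpa [F] using congr($hF fun i => l[i])

section DeltaAlong

variable {A B M N : Type*} [CommRing A] [CommRing B] [AddCommGroup M] [Module A M]
  [AddCommGroup N] [Module B N] (φ : A →+* B)

theorem deltaAB_eq_deltaPQ : deltaAB φ = deltaPQ (P := A) (Q := B) φ := rfl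

theorem deltaPQ_add (a : A) (f g : M → N) :
    deltaPQ φ a (f + g) = deltaPQ φ a f + deltaPQ φ a g := by
  funext m
  simp only [deltaPQ, Pi.add_apply, smul_add]
  abel

theorem deltaPQ_zero (a : A) : deltaPQ φ a (0 : M → N) = 0 := by
  funext m
  simp [deltaPQ]

theorem foldr_deltaPQ_add (l : List A) (f g : M → N) :
    l.foldr (deltaPQ φ) (f + g) = l.foldr (deltaPQ φ) f + l.foldr (deltaPQ φ) g := by
  induction l with
  | nil => rfl
  | cons a l ih => simp only [List.foldr_cons, ih, deltaPQ_add]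

theorem foldr_deltaPQ_zero (l : List A) : l.foldr (deltaPQ φ) (0 : M → N) = 0 := by
  induction l with
  | nil => rfl
  | cons a l ih => rw [List.foldr_cons, ih, deltaPQ_zero]

theorem deltaPQ_left_comm (a b : A) (Δ : M → N) :
    deltaPQ φ a (deltaPQ φ b Δ) = deltaPQ φ b (deltaPQ φ a Δ) := by
  funext m
  simp only [deltaPQ, smul_sub, smul_smul, mul_comm (φ a), smul_comm a b]
  abel

instance : LeftCommutative (deltaPQ (P := M) (Q := N) φ) := ⟨deltaPQ_left_comm φ⟩

theorem foldr_deltaPQ_perm (Δ : M → N) {l l' : List A} (h : l.Perm l') :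
    l.foldr (deltaPQ φ) Δ = l'.foldr (deltaPQ φ) Δ :=
  h.foldr_eq Δ

variable {φ} {Δ : M → N}

theorem deltaPQ_map_add (hΔ : ∀ x y, Δ (x + y) = Δ x + Δ y) (a : A) (x y : M) :
    deltaPQ φ a Δ (x + y) = deltaPQ φ a Δ x + deltaPQ φ a Δ y := by
  simp only [deltaPQ, smul_add, hΔ]
  abel

theorem foldr_deltaPQ_map_add (hΔ : ∀ x y, Δ (x + y) = Δ x + Δ y) (l : List A) (x y : M) :
    l.foldr (deltaPQ φ) Δ (x + y) = l.foldr (deltaPQ φ) Δ x + l.foldr (deltaPQ φ) Δ y := by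
  induction l generalizing x y with
  | nil => exact hΔ x y
  | cons a l ih => exact deltaPQ_map_add ih a x y

theorem foldr_deltaPQ_map_zero (hΔ : ∀ x y, Δ (x + y) = Δ x + Δ y) (l : List A) :
    l.foldr (deltaPQ φ) Δ 0 = 0 :=
  (AddMonoidHom.mk' _ (foldr_deltaPQ_map_add hΔ l)).map_zero

theorem deltaPQ_add_left (hΔ : ∀ x y, Δ (x + y) = Δ x + Δ y) (a b : A) :
    deltaPQ φ (a + b) Δ = deltaPQ φ a Δ + deltaPQ φ b Δ := by
  funext m
  simp only [deltaPQ, map_add, add_smul, hΔ, Pi.add_apply]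
  abel

theorem foldr_deltaPQ_set_add (hΔ : ∀ x y, Δ (x + y) = Δ x + Δ y) {l : List A} {i : ℕ}
    (hi : i < l.length) (a b : A) :
    (l.set i (a + b)).foldr (deltaPQ φ) Δ =
      (l.set i a).foldr (deltaPQ φ) Δ + (l.set i b).foldr (deltaPQ φ) Δ := by
  simp only [foldr_deltaPQ_perm φ Δ (List.set_perm_cons_eraseIdx hi _), List.foldr_cons]
  exact deltaPQ_add_left (foldr_deltaPQ_map_add hΔ _) a b

theorem foldr_deltaPQ_map_smul {k : ℕ}
    (h : ∀ l : List A, l.length = k + 1 → l.foldr (deltaPQ φ) Δ = 0) {l : List A}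
    (hl : l.length = k) (c : A) (m : M) :
    l.foldr (deltaPQ φ) Δ (c • m) = φ c • l.foldr (deltaPQ φ) Δ m :=
  (sub_eq_zero.1 (congrFun (h (c :: l) (by simp [hl])) m)).symm

end DeltaAlong

section Diole

variable {A B P Q : Type*} [CommRing A] [CommRing B] [AddCommGroup P] [Module A P]
  [AddCommGroup Q] [Module B Q] (φ : A →+* B) (φb : P → Q)

def dioleDefect (F : A → B) (G : P → Q) (p : P) : A → Q :=
  fun x => F x • φb p - G (x • p)

theorem deltaPQ_dioleDefect (a : A) (F : A → B) (G : P → Q) (p : P) :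
    deltaPQ φ a (dioleDefect φb F G p) = dioleDefect φb (deltaPQ φ a F) (deltaPQ φ a G) p := by
  funext x
  simp only [deltaPQ, dioleDefect, smul_sub, sub_smul, smul_eq_mul, mul_smul]
  abel

theorem foldr_deltaPQ_dioleDefect (l : List A) (F : A → B) (G : P → Q) (p : P) :
    l.foldr (deltaPQ φ) (dioleDefect φb F G p) =
      dioleDefect φb (l.foldr (deltaPQ φ) F) (l.foldr (deltaPQ φ) G) p := by
  induction l with
  | nil => rfl
  | cons a l ih => simp only [List.foldr_cons, ih, deltaPQ_dioleDefect]

theorem dioleDefect_apply {F : A → B} {G : P → Q} (hF : ∀ (c : A) x, F (c • x) = φ c • F x)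
    (hG : ∀ (c : A) p, G (c • p) = φ c • G p) (p : P) (x : A) :
    dioleDefect φb F G p x = φ x • dioleDefect φb F G p 1 := by
  have hFx : F x = φ x • F 1 := by simpa using hF x 1
  simp only [dioleDefect, hFx, hG, one_smul, smul_sub, smul_assoc]

/-- The part of the second component of `δ_{t₁} ⋯ δ_{tₙ} (Δ^A, Δ^P)` that depends on the
`A`-coordinate. -/
def dioleCross (ΔA : A → B) (ΔP : P → Q) : List (A × P) → A → Q
  | [] => 0
  | t :: ts => deltaPQ φ t.1 (dioleCross ΔA ΔP ts) +
      dioleDefect φb ((ts.map Prod.fst).foldr (deltaPQ φ) ΔA)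
        ((ts.map Prod.fst).foldr (deltaPQ φ) ΔP) t.2

variable {φ φb} {ΔA : A → B} {ΔP : P → Q}

theorem foldr_dioleDelta (hΔP : ∀ p p', ΔP (p + p') = ΔP p + ΔP p') (ts : List (A × P)) :
    ts.foldr (dioleDelta φ φb) (fun s => (ΔA s.1, ΔP s.2)) = fun s =>
      ((ts.map Prod.fst).foldr (deltaPQ φ) ΔA s.1,
        (ts.map Prod.fst).foldr (deltaPQ φ) ΔP s.2 + dioleCross φ φb ΔA ΔP ts s.1) := by
  induction ts with
  | nil =>
    funext s
    simp [dioleCross]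
  | cons t ts ih =>
    funext s
    rw [List.foldr_cons, ih]
    ext
    · rfl
    · simp only [dioleDelta, dioleAct, dioleMul, List.map_cons, List.foldr_cons, dioleCross,
        Prod.snd_sub, foldr_deltaPQ_map_add hΔP, deltaPQ, dioleDefect, smul_add, Pi.add_apply]
      abel

theorem dioleCross_eq_zero (hφb : φb 0 = 0) (hΔP : ∀ p p', ΔP (p + p') = ΔP p + ΔP p')
    {ts : List (A × P)} (hts : ∀ t ∈ ts, t.2 = 0) : dioleCross φ φb ΔA ΔP ts = 0 := by
  induction ts with
  | nil => rfl
  | cons t ts ih =>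
    funext x
    simp [dioleCross, ih fun t ht => hts t (by simp [ht]), hts t (by simp), deltaPQ_zero,
      dioleDefect, hφb, foldr_deltaPQ_map_zero hΔP]

theorem dioleCross_cons_replicate (hφb : φb 0 = 0) (hΔP : ∀ p p', ΔP (p + p') = ΔP p + ΔP p')
    (a : A) (p : P) (k : ℕ) :
    dioleCross φ φb ΔA ΔP ((a, p) :: List.replicate k (a, 0)) 1 =
      ((deltaPQ φ a)^[k] ΔA) 1 • φb p - ((deltaPQ φ a)^[k] ΔP) p := by
  have hcross : dioleCross φ φb ΔA ΔP (List.replicate k (a, 0)) = 0 :=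
    dioleCross_eq_zero hφb hΔP fun t ht => by rw [List.eq_of_mem_replicate ht]
  simp [dioleCross, hcross, deltaPQ_zero, dioleDefect, List.foldr_replicate]

theorem foldr_dioleCross_eq_zero {k : ℕ}
    (hdefect : ∀ bs : List A, bs.length = k → ∀ p,
      dioleDefect φb (bs.foldr (deltaPQ φ) ΔA) (bs.foldr (deltaPQ φ) ΔP) p = 0) :
    ∀ (ts : List (A × P)) (bs : List A), bs.length + ts.length = k + 1 →
      bs.foldr (deltaPQ φ) (dioleCross φ φb ΔA ΔP ts) = 0
  | [], bs, _ => foldr_deltaPQ_zero φ bs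
  | t :: ts, bs, hlen => by
    have hcross := foldr_dioleCross_eq_zero hdefect ts (bs ++ [t.1])
      (by simp at hlen ⊢; omega)
    rw [List.foldr_append, List.foldr_cons, List.foldr_nil] at hcross
    rw [dioleCross, foldr_deltaPQ_add, hcross, foldr_deltaPQ_dioleDefect, ← List.foldr_append,
      ← List.foldr_append, hdefect _ (by simp at hlen ⊢; omega), zero_add]

theorem dioleDefect_foldr_eq_zero (K : Type*) [Field K] [CharZero K] [Algebra K B] {k : ℕ}
    (hΔA : ∀ a a', ΔA (a + a') = ΔA a + ΔA a') (hΔP : ∀ p p', ΔP (p + p') = ΔP p + ΔP p')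
    (hA : ∀ as : List A, as.length = k + 1 → as.foldr (deltaPQ φ) ΔA = 0)
    (hP : ∀ as : List A, as.length = k + 1 → as.foldr (deltaPQ φ) ΔP = 0)
    (hdiag : ∀ (a : A) (p : P), ((deltaPQ φ a)^[k] ΔA) 1 • φb p = ((deltaPQ φ a)^[k] ΔP) p)
    (bs : List A) (hbs : bs.length = k) (p : P) :
    dioleDefect φb (bs.foldr (deltaPQ φ) ΔA) (bs.foldr (deltaPQ φ) ΔP) p = 0 := by
  have : IsAddTorsionFree Q := .of_module_of_algebra K (B := B)
  have hone : ∀ l : List A, l.length = k →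
      dioleDefect φb (l.foldr (deltaPQ φ) ΔA) (l.foldr (deltaPQ φ) ΔP) p 1 = 0 :=
    fun l hl => List.eq_zero_of_perm_invariant_of_set_add
      (fun l => dioleDefect φb (l.foldr (deltaPQ φ) ΔA) (l.foldr (deltaPQ φ) ΔP) p 1)
      (fun l i a b hi => by
        simp only [dioleDefect, foldr_deltaPQ_set_add hΔA hi, foldr_deltaPQ_set_add hΔP hi,
          Pi.add_apply, add_smul]
        abel)
      (fun l l' h => by simp only [foldr_deltaPQ_perm φ _ h])
      (fun a => by simp [dioleDefect, List.foldr_replicate, hdiag])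
      hl
  funext x
  rw [Pi.zero_apply, dioleDefect_apply φ φb (foldr_deltaPQ_map_smul hA hbs)
    (foldr_deltaPQ_map_smul hP hbs), hone bs hbs, smul_zero]

end Diole

theorem diolic_diff_operators_along_map_general {K A B P Q : Type*} [Field K] [CharZero K]
    [CommRing A] [CommRing B] [Algebra K B]
    [AddCommGroup P] [Module A P] [AddCommGroup Q] [Module B Q]
    (φ : A →+* B) (φb : P → Q)
    (hφb_add : ∀ p p' : P, φb (p + p') = φb p + φb p')
    (k : ℕ)
    (ΔA : A → B) (hΔA : ∀ a a', ΔA (a + a') = ΔA a + ΔA a')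
    (ΔP : P → Q) (hΔP : ∀ p p', ΔP (p + p') = ΔP p + ΔP p') :
    (∀ ts : List (A × P), ts.length = k + 1 →
        ts.foldr (dioleDelta φ φb) (fun s => (ΔA s.1, ΔP s.2)) = 0) ↔
      ((∀ as : List A, as.length = k + 1 → as.foldr (deltaAB φ) ΔA = 0) ∧
       (∀ as : List A, as.length = k + 1 → as.foldr (deltaPQ φ) ΔP = 0) ∧
       (∀ (a : A) (p : P),
          ((deltaAB φ a)^[k] ΔA) 1 • φb p = ((deltaPQ φ a)^[k] ΔP) p)) := by
  simp_rw [deltaAB_eq_deltaPQ, foldr_dioleDelta hΔP]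
  have hφb : φb 0 = 0 := (AddMonoidHom.mk' φb hφb_add).map_zero
  constructor
  · intro h
    have hsubalgebra (as : List A) (has : as.length = k + 1) (s : A × P) :
        as.foldr (deltaPQ φ) ΔA s.1 = 0 ∧ as.foldr (deltaPQ φ) ΔP s.2 = 0 := by
      simpa [Function.comp_def, dioleCross_eq_zero hφb hΔP] using
        congrFun (h (as.map (·, 0)) (by simp [has])) s
    refine ⟨fun as has => funext fun x => (hsubalgebra as has (x, 0)).1,
      fun as has => funext fun q => (hsubalgebra as has (0, q)).2, fun a p => ?_⟩
    simpa [dioleCross_cons_replicate hφb hΔP, foldr_deltaPQ_map_zero hΔP, sub_eq_zero] using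
      congrArg Prod.snd (congrFun (h ((a, p) :: List.replicate k (a, 0)) (by simp)) (1, 0))
  · rintro ⟨hA, hP, hdiag⟩ ts hts
    have hfst : (ts.map Prod.fst).length = k + 1 := by simp [hts]
    have hcross : dioleCross φ φb ΔA ΔP ts = 0 := foldr_dioleCross_eq_zero
      (dioleDefect_foldr_eq_zero K hΔA hΔP hA hP hdiag) ts [] (by simp [hts])
    funext s
    simp [hA _ hfst, hP _ hfst, hcross]

/-- characterization of degree-zero order `≤ k` diolic differential
operators `Δ = (Δ^A, Δ^P) : 𝒜 → 𝒫_φ̄` in terms of differential operators along `φ`,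
along `φ̄`, and the compatibility `φ̄(p)•δ_a^k(Δ^A)(1) = δ_a^k(Δ^P)(p)`. -/
theorem diolic_diff_operators_along_map {K A B P Q : Type*} [Field K] [CharZero K]
    [CommRing A] [CommRing B] [Algebra K A] [Algebra K B]
    [AddCommGroup P] [Module A P] [AddCommGroup Q] [Module B Q]
    (φ : A →+* B) (φb : P → Q)
    (hφb_add : ∀ p p' : P, φb (p + p') = φb p + φb p')
    (hφb_smul : ∀ (a : A) (p : P), φb (a • p) = φ a • φb p)
    (k : ℕ)
    (ΔA : A → B) (hΔA : ∀ a a', ΔA (a + a') = ΔA a + ΔA a')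
    (ΔP : P → Q) (hΔP : ∀ p p', ΔP (p + p') = ΔP p + ΔP p') :
    (∀ ts : List (A × P), ts.length = k + 1 →
        ts.foldr (dioleDelta φ φb) (fun s => (ΔA s.1, ΔP s.2)) = 0) ↔
      ((∀ as : List A, as.length = k + 1 → as.foldr (deltaAB φ) ΔA = 0) ∧
       (∀ as : List A, as.length = k + 1 → as.foldr (deltaPQ φ) ΔP = 0) ∧
       (∀ (a : A) (p : P),
          ((deltaAB φ a)^[k] ΔA) 1 • φb p = ((deltaPQ φ a)^[k] ΔP) p)) :=
  diolic_diff_operators_along_map_general (K := K) φ φb hφb_add k ΔA hΔA ΔP hΔP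
end
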